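/- Every element g of SL₃(F) induces an algebra automorphism of the Zorn octonion algebra via e₁ ↦ e₁, e₂ ↦ e₂, u ↦ u·g (matrix action on the upper-right vector), v ↦ v·(g⁻¹)ᵀ (on the lower-left vector). -/

import Mathlib

open Matrix

/-- The Zorn vector-matrix algebra: elements `(α, u; v, β)` with `α β : F`, `u v : F³`. -/
def Zorn (F : Type*) : Type _ := F × F × (Fin 3 → F) × (Fin 3 → F)

namespace Zorn

variable {F : Type*} [Field F]

/-- Build a Zorn matrix from its four components. -/
def mk (a b : F) (u v : Fin 3 → F) : Zorn F := (a, b, u, v)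

/-- The upper-left scalar entry `α`. -/
def al (x : Zorn F) : F := x.1
/-- The lower-right scalar entry `β`. -/
def be (x : Zorn F) : F := x.2.1
/-- The upper-right vector entry `u`. -/
def up (x : Zorn F) : Fin 3 → F := x.2.2.1
/-- The lower-left vector entry `v`. -/
def lo (x : Zorn F) : Fin 3 → F := x.2.2.2

instance : AddCommGroup (Zorn F) :=
  inferInstanceAs (AddCommGroup (F × F × (Fin 3 → F) × (Fin 3 → F)))

instance : Module F (Zorn F) :=
  inferInstanceAs (Module F (F × F × (Fin 3 → F) × (Fin 3 → F)))

/-- Zorn vector-matrix multiplication. -/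
instance : Mul (Zorn F) :=
  ⟨fun x y => mk (x.al * y.al + x.up ⬝ᵥ y.lo)
      (x.be * y.be + x.lo ⬝ᵥ y.up)
      (x.al • y.up + y.be • x.up - crossProduct x.lo y.lo)
      (y.al • x.lo + x.be • y.lo + crossProduct x.up y.up)⟩

instance : One (Zorn F) := ⟨mk 1 1 0 0⟩

/-- The standard conjugation (involution) of the Zorn algebra. -/
def conj (x : Zorn F) : Zorn F := mk x.be x.al (-x.up) (-x.lo)

/-- The trace `t(a) = α + β` (the scalar such that `a + conj a = t a • 1`). -/
def t (x : Zorn F) : F := x.al + x.be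

/-- The norm `n(a) = αβ - u·v` (the scalar such that `a * conj a = n a • 1`). -/
def n (x : Zorn F) : F := x.al * x.be - x.up ⬝ᵥ x.lo

/-- The idempotent `e₁`. -/
def e₁ : Zorn F := mk 1 0 0 0
/-- The idempotent `e₂`. -/
def e₂ : Zorn F := mk 0 1 0 0
/-- The basis element `u_i`. -/
def U (i : Fin 3) : Zorn F := mk 0 0 (Pi.single i 1) 0
/-- The basis element `v_i`. -/
def V (i : Fin 3) : Zorn F := mk 0 0 0 (Pi.single i 1)

/-- An (algebra) automorphism of the Zorn algebra: a bijective `F`-linear,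
multiplicative, unital self-map. -/
def IsAut (g : Zorn F → Zorn F) : Prop :=
  Function.Bijective g ∧ (∀ x y : Zorn F, g (x + y) = g x + g y) ∧
    (∀ (c : F) (x : Zorn F), g (c • x) = c • g x) ∧
    (∀ x y : Zorn F, g (x * y) = g x * g y) ∧ g 1 = 1

end Zorn

open Zorn

/-! The pairing `u ⬝ᵥ v` is preserved because `g` and `(g⁻¹)ᵀ` act contragrediently, and the
cross product satisfies `(u g) ⨯₃ (u' g) = (u ⨯₃ u') (adj g)ᵀ`, where `adj g = g⁻¹` when
`det g = 1`; the same applies to `(g⁻¹)ᵀ`, whose inverse transpose is `g`. Every component of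
the Zorn product is built from these two operations and scalar multiplications, so `act g` is
multiplicative. -/

namespace Matrix

variable {R : Type*} [CommRing R]

theorem cross_vecMul_vecMul (A : Matrix (Fin 3) (Fin 3) R) (u v : Fin 3 → R) :
    (u ᵥ* A) ⨯₃ (v ᵥ* A) = (u ⨯₃ v) ᵥ* A.adjugateᵀ := by
  ext i
  fin_cases i <;>
    simp [cross_apply, vecMul, dotProduct, adjugate_fin_three, Fin.sum_univ_three] <;> ring

theorem cross_vecMul_vecMul_of_det_eq_one {A : Matrix (Fin 3) (Fin 3) R} (hA : A.det = 1)
    (u v : Fin 3 → R) : (u ᵥ* A) ⨯₃ (v ᵥ* A) = (u ⨯₃ v) ᵥ* A⁻¹ᵀ := by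
  rw [cross_vecMul_vecMul, inv_def, hA]
  simp

theorem vecMul_dotProduct_vecMul_inv_transpose {n : Type*} [Fintype n] [DecidableEq n]
    {A : Matrix n n R} (hA : IsUnit A.det) (u v : n → R) :
    (u ᵥ* A) ⬝ᵥ (v ᵥ* A⁻¹ᵀ) = u ⬝ᵥ v := by
  rw [vecMul_transpose, dotProduct_mulVec, vecMul_vecMul, mul_nonsing_inv _ hA, vecMul_one]

end Matrix

namespace Zorn

variable {F : Type*}

@[ext]
theorem ext {x y : Zorn F} (hal : x.al = y.al) (hbe : x.be = y.be) (hup : x.up = y.up)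
    (hlo : x.lo = y.lo) : x = y := by
  obtain ⟨a, b, u, v⟩ := x
  obtain ⟨a', b', u', v'⟩ := y
  simp only [al, be, up, lo] at *
  subst_vars
  rfl

@[simp] theorem al_mk (a b : F) (u v : Fin 3 → F) : (mk a b u v).al = a := rfl
@[simp] theorem be_mk (a b : F) (u v : Fin 3 → F) : (mk a b u v).be = b := rfl
@[simp] theorem up_mk (a b : F) (u v : Fin 3 → F) : (mk a b u v).up = u := rfl
@[simp] theorem lo_mk (a b : F) (u v : Fin 3 → F) : (mk a b u v).lo = v := rfl

variable [Field F]

@[simp] theorem al_add (x y : Zorn F) : (x + y).al = x.al + y.al := rfl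
@[simp] theorem be_add (x y : Zorn F) : (x + y).be = x.be + y.be := rfl
@[simp] theorem up_add (x y : Zorn F) : (x + y).up = x.up + y.up := rfl
@[simp] theorem lo_add (x y : Zorn F) : (x + y).lo = x.lo + y.lo := rfl

@[simp] theorem al_smul (c : F) (x : Zorn F) : (c • x).al = c * x.al := rfl
@[simp] theorem be_smul (c : F) (x : Zorn F) : (c • x).be = c * x.be := rfl
@[simp] theorem up_smul (c : F) (x : Zorn F) : (c • x).up = c • x.up := rfl
@[simp] theorem lo_smul (c : F) (x : Zorn F) : (c • x).lo = c • x.lo := rfl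

@[simp] theorem al_one : (1 : Zorn F).al = 1 := rfl
@[simp] theorem be_one : (1 : Zorn F).be = 1 := rfl
@[simp] theorem up_one : (1 : Zorn F).up = 0 := rfl
@[simp] theorem lo_one : (1 : Zorn F).lo = 0 := rfl

theorem al_mul (x y : Zorn F) : (x * y).al = x.al * y.al + x.up ⬝ᵥ y.lo := rfl
theorem be_mul (x y : Zorn F) : (x * y).be = x.be * y.be + x.lo ⬝ᵥ y.up := rfl
theorem up_mul (x y : Zorn F) :
    (x * y).up = x.al • y.up + y.be • x.up - x.lo ⨯₃ y.lo := rfl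
theorem lo_mul (x y : Zorn F) :
    (x * y).lo = y.al • x.lo + x.be • y.lo + x.up ⨯₃ y.up := rfl

noncomputable def act (g : Matrix (Fin 3) (Fin 3) F) (x : Zorn F) : Zorn F :=
  mk x.al x.be (x.up ᵥ* g) (x.lo ᵥ* g⁻¹ᵀ)

variable (g : Matrix (Fin 3) (Fin 3) F)

theorem act_add (x y : Zorn F) : act g (x + y) = act g x + act g y := by
  ext <;> simp [act, add_vecMul]

theorem act_smul (c : F) (x : Zorn F) : act g (c • x) = c • act g x := by
  ext <;> simp [act, smul_vecMul]

theorem act_one : act g (1 : Zorn F) = 1 := by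
  ext <;> simp [act]

theorem one_act (x : Zorn F) : act 1 x = x := by
  ext <;> simp [act]

theorem act_act (h : Matrix (Fin 3) (Fin 3) F) (x : Zorn F) :
    act h (act g x) = act (g * h) x := by
  ext <;> simp [act, vecMul_vecMul, Matrix.mul_inv_rev, transpose_mul]

theorem act_bijective {g : Matrix (Fin 3) (Fin 3) F} (hg : IsUnit g.det) :
    Function.Bijective (act g) :=
  Function.bijective_iff_has_inverse.mpr ⟨act g⁻¹,
    fun x => by rw [act_act, mul_nonsing_inv _ hg, one_act],
    fun x => by rw [act_act, nonsing_inv_mul _ hg, one_act]⟩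

theorem act_mul {g : Matrix (Fin 3) (Fin 3) F} (hg : g.det = 1) (x y : Zorn F) :
    act g (x * y) = act g x * act g y := by
  have hdot := vecMul_dotProduct_vecMul_inv_transpose (A := g) (by simp [hg])
  have hinvT : (g⁻¹ᵀ).det = 1 := by simp [hg]
  have hinvTinvT : g⁻¹ᵀ⁻¹ᵀ = g := by simp [transpose_nonsing_inv, hg]
  ext1 <;> simp only [act, al_mul, be_mul, up_mul, lo_mul, al_mk, be_mk, up_mk, lo_mk]
  · rw [hdot]
  · rw [dotProduct_comm (x.lo ᵥ* _), hdot, dotProduct_comm]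
  · rw [sub_vecMul, add_vecMul, smul_vecMul, smul_vecMul,
      cross_vecMul_vecMul_of_det_eq_one hinvT, hinvTinvT]
  · rw [add_vecMul, add_vecMul, smul_vecMul, smul_vecMul, cross_vecMul_vecMul_of_det_eq_one hg]

end Zorn

/-- Every `g ∈ SL₃(F)` induces an automorphism of the Zorn octonion algebra via
`e₁ ↦ e₁`, `e₂ ↦ e₂`, `u ↦ u·g`, `v ↦ v·(g⁻¹)ᵀ`. -/
theorem zorn_sl3_aut {F : Type*} [Field F]
    (g : Matrix (Fin 3) (Fin 3) F) (hg : g.det = 1) :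
    Zorn.IsAut (fun x : Zorn F => Zorn.mk x.al x.be (x.up ᵥ* g) (x.lo ᵥ* g⁻¹ᵀ)) :=
  ⟨act_bijective (by simp [hg]), act_add g, act_smul g, act_mul hg, act_one g⟩
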